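/- arXiv:1912.08105 — 2 statements merged into one kernel-verified Lean document; each statement's English description precedes it below -/
import Mathlib

section
/- Suppose Im A ⊆ D₀(g(A)) and A has a bounded inverse on its range, i.e. there exists c > 0 with ‖Ax‖ ≥ c‖x‖ for all x ∈ D(A). Then g(A) is bounded on Im A: there exists C > 0 such that ‖g(A)y‖ ≤ C‖y‖ for all y ∈ Im A. -/
open MeasureTheory Filter Topology Set

noncomputable section

/-- `IsGen T x y` means `x` lies in the domain `D(A)` of the generator `A` of the
`C₀`-semigroup `T` and `A x = y`. -/
def IsGen {X : Type*} [NormedAddCommGroup X] [NormedSpace ℂ X]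
    (T : ℝ → X →L[ℂ] X) (x y : X) : Prop :=
  Tendsto (fun t : ℝ => t⁻¹ • (T t x - x)) (𝓝[>] (0 : ℝ)) (𝓝 y)

/-! The graph of the generator is closed: `(x, y)` lies in it iff `T b x - x = ∫₀ᵇ T s y` for
all `b ≥ 0`, a condition continuous in `(x, y)`. It is therefore a Banach space, on which
`(x, y) ↦ ∫ h t • T t y dμ` is the pointwise limit of the bounded truncations to sets of
finite measure, hence bounded by Banach–Steinhaus. Finally `c‖x‖ ≤ ‖y‖` makes the graph norm
`‖(x, y)‖` comparable to `‖y‖`. -/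

section StrongIntegral

variable {α 𝕜 E F : Type*} [MeasurableSpace α] {ν : Measure α} [NontriviallyNormedField 𝕜]
  [NormedAddCommGroup E] [NormedSpace 𝕜 E] [NormedAddCommGroup F] [NormedSpace ℝ F]
  [NormedSpace 𝕜 F] [SMulCommClass ℝ 𝕜 F]

theorem exists_continuousLinearMap_integral_apply_of_isFiniteMeasure [IsFiniteMeasure ν]
    (K : α → E →L[𝕜] F) {M : ℝ} (hK : ∀ᵐ t ∂ν, ‖K t‖ ≤ M)
    (hint : ∀ e, Integrable (fun t => K t e) ν) :
    ∃ Φ : E →L[𝕜] F, ∀ e, Φ e = ∫ t, K t e ∂ν := by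
  let Φ : E →ₗ[𝕜] F :=
    { toFun := fun e => ∫ t, K t e ∂ν
      map_add' := fun e e' => by simp only [map_add, integral_add (hint e) (hint e')]
      map_smul' := fun c e => by simp only [map_smul, integral_smul, RingHom.id_apply] }
  refine ⟨Φ.mkContinuous (M * ν.real univ) fun e => ?_, fun e => rfl⟩
  have hKe : ∀ᵐ t ∂ν, ‖K t e‖ ≤ M * ‖e‖ := hK.mono fun t ht => (K t).le_of_opNorm_le ht e
  calc ‖∫ t, K t e ∂ν‖ ≤ M * ‖e‖ * ν.real univ := norm_integral_le_of_norm_le_const hKe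
    _ = M * ν.real univ * ‖e‖ := by ring

theorem exists_continuousLinearMap_integral_apply [SigmaFinite ν] [CompleteSpace E]
    (K : α → E →L[𝕜] F) {M : ℝ} (hK : ∀ᵐ t ∂ν, ‖K t‖ ≤ M)
    (hint : ∀ e, Integrable (fun t => K t e) ν) :
    ∃ Ψ : E →L[𝕜] F, ∀ e, Ψ e = ∫ t, K t e ∂ν := by
  have hfin (n : ℕ) : IsFiniteMeasure (ν.restrict (spanningSets ν n)) :=
    isFiniteMeasure_restrict.2 (measure_spanningSets_lt_top ν n).ne
  choose Φ hΦ using fun n => exists_continuousLinearMap_integral_apply_of_isFiniteMeasure K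
    (ae_restrict_of_ae hK) (fun e => (hint e).restrict (s := spanningSets ν n))
  have hlim : Tendsto (fun n e => Φ n e) atTop (𝓝 fun e => ∫ t, K t e ∂ν) := by
    refine tendsto_pi_nhds.2 fun e => ?_
    simp only [hΦ]
    have := tendsto_setIntegral_of_monotone (measurableSet_spanningSets ν)
      (monotone_spanningSets ν) (f := fun t => K t e)
      (by rw [iUnion_spanningSets]; exact (hint e).integrableOn)
    rwa [iUnion_spanningSets, setIntegral_univ] at this
  exact ⟨continuousLinearMapOfTendsto Φ hlim, fun e => rfl⟩

end StrongIntegral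

section Generator

variable {X : Type*} [NormedAddCommGroup X] [NormedSpace ℂ X] {T : ℝ → X →L[ℂ] X}

theorem IsGen.zero (T : ℝ → X →L[ℂ] X) : IsGen T 0 0 := by
  simp [IsGen]

theorem IsGen.add {x y x' y' : X} (h : IsGen T x y) (h' : IsGen T x' y') :
    IsGen T (x + x') (y + y') :=
  (Tendsto.add h h').congr fun t => by simp only [map_add, add_sub_add_comm, smul_add]

theorem IsGen.smul {x y : X} (c : ℂ) (h : IsGen T x y) : IsGen T (c • x) (c • y) :=
  (h.const_smul c).congr fun t => by simp only [map_smul, ← smul_sub, smul_comm c]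

variable (T) in
def generatorGraph : Submodule ℂ (X × X) where
  carrier := {p | IsGen T p.1 p.2}
  add_mem' := IsGen.add
  zero_mem' := IsGen.zero T
  smul_mem' c _ := IsGen.smul c

theorem mem_generatorGraph {p : X × X} : p ∈ generatorGraph T ↔ IsGen T p.1 p.2 := Iff.rfl

theorem IsGen.hasDerivWithinAt_orbit
    (hTadd : ∀ s t : ℝ, 0 ≤ s → 0 ≤ t → T (s + t) = (T s).comp (T t))
    {x y : X} (hxy : IsGen T x y) {t : ℝ} (ht : 0 ≤ t) :
    HasDerivWithinAt (fun u => T u x) (T t y) (Ici t) t := by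
  rw [← hasDerivWithinAt_Ioi_iff_Ici,
    hasDerivWithinAt_iff_tendsto_slope' (s := Ioi t) (lt_irrefl t)]
  have hshift : Tendsto (fun u : ℝ => u - t) (𝓝[>] t) (𝓝[>] 0) :=
    tendsto_nhdsWithin_of_tendsto_nhds_of_eventually_within _
      (((continuous_sub_right t).tendsto' t 0 (sub_self t)).mono_left nhdsWithin_le_nhds)
      (eventually_nhdsWithin_of_forall fun _ hu => mem_Ioi.2 (sub_pos.2 hu))
  refine (((T t).continuous.tendsto y).comp (hxy.comp hshift)).congr' ?_
  filter_upwards [self_mem_nhdsWithin] with u hu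
  have hu : T u = (T t).comp (T (u - t)) := by
    rw [← hTadd t (u - t) ht (sub_pos.2 hu).le, add_sub_cancel]
  simp [slope_def_module, hu]

theorem hasDerivWithinAt_integral_orbit [CompleteSpace X]
    (hTcont : ∀ x : X, ContinuousOn (fun t => T t x) (Ici (0 : ℝ)))
    (y : X) {t : ℝ} (ht : 0 ≤ t) :
    HasDerivWithinAt (fun u => ∫ s in (0 : ℝ)..u, T s y) (T t y) (Ici t) t := by
  have hcont : ContinuousOn (fun s => T s y) (Ici t) := (hTcont y).mono (Ici_subset_Ici.2 ht)
  refine intervalIntegral.integral_hasDerivWithinAt_right (t := Ioi t)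
    (((hTcont y).mono Icc_subset_Ici_self).intervalIntegrable_of_Icc ht)
    ⟨Ioi t, self_mem_nhdsWithin, ?_⟩
    ((hcont t (mem_Ici.2 le_rfl)).mono Ioi_subset_Ici_self)
  exact (hcont.mono Ioi_subset_Ici_self).aestronglyMeasurable measurableSet_Ioi

theorem IsGen.orbit_sub_eq_integral [CompleteSpace X] (hT0 : T 0 = ContinuousLinearMap.id ℂ X)
    (hTadd : ∀ s t : ℝ, 0 ≤ s → 0 ≤ t → T (s + t) = (T s).comp (T t))
    (hTcont : ∀ x : X, ContinuousOn (fun t => T t x) (Ici (0 : ℝ)))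
    {x y : X} (hxy : IsGen T x y) {b : ℝ} (hb : 0 ≤ b) :
    T b x - x = ∫ s in (0 : ℝ)..b, T s y := by
  have hconst := constant_of_has_deriv_right_zero
    (f := fun u => T u x - ∫ s in (0 : ℝ)..u, T s y) (a := 0) (b := b) ?_ ?_ b ⟨hb, le_rfl⟩
  · simp only [hT0, ContinuousLinearMap.id_apply, intervalIntegral.integral_same, sub_zero]
      at hconst
    rw [sub_eq_iff_eq_add'] at hconst ⊢
    rw [hconst, add_comm]
  · refine ((hTcont x).mono Icc_subset_Ici_self).sub ?_
    simpa [uIcc_of_le hb] using intervalIntegral.continuousOn_primitive_interval'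
      (((hTcont y).mono Icc_subset_Ici_self).intervalIntegrable_of_Icc hb) left_mem_uIcc
  · intro u hu
    simpa using (hxy.hasDerivWithinAt_orbit hTadd hu.1).fun_sub
      (hasDerivWithinAt_integral_orbit hTcont y hu.1)

theorem isGen_of_forall_orbit_sub_eq_integral [CompleteSpace X]
    (hT0 : T 0 = ContinuousLinearMap.id ℂ X)
    (hTcont : ∀ x : X, ContinuousOn (fun t => T t x) (Ici (0 : ℝ))) {x y : X}
    (H : ∀ b : ℝ, 0 ≤ b → T b x - x = ∫ s in (0 : ℝ)..b, T s y) :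
    IsGen T x y := by
  have hd := hasDerivWithinAt_integral_orbit hTcont y le_rfl
  rw [← hasDerivWithinAt_Ioi_iff_Ici,
    hasDerivWithinAt_iff_tendsto_slope' (s := Ioi 0) (lt_irrefl 0), hT0,
    ContinuousLinearMap.id_apply] at hd
  refine hd.congr' ?_
  filter_upwards [self_mem_nhdsWithin] with t ht
  simp [slope_def_module, H t (le_of_lt ht)]

theorem isGen_iff_forall_orbit_sub_eq_integral [CompleteSpace X]
    (hT0 : T 0 = ContinuousLinearMap.id ℂ X)
    (hTadd : ∀ s t : ℝ, 0 ≤ s → 0 ≤ t → T (s + t) = (T s).comp (T t))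
    (hTcont : ∀ x : X, ContinuousOn (fun t => T t x) (Ici (0 : ℝ))) {x y : X} :
    IsGen T x y ↔ ∀ b : ℝ, 0 ≤ b → T b x - x = ∫ s in (0 : ℝ)..b, T s y :=
  ⟨fun hxy _ hb => hxy.orbit_sub_eq_integral hT0 hTadd hTcont hb,
    isGen_of_forall_orbit_sub_eq_integral hT0 hTcont⟩

theorem isClosed_generatorGraph [CompleteSpace X] (hT0 : T 0 = ContinuousLinearMap.id ℂ X)
    (hTadd : ∀ s t : ℝ, 0 ≤ s → 0 ≤ t → T (s + t) = (T s).comp (T t))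
    (hTcont : ∀ x : X, ContinuousOn (fun t => T t x) (Ici (0 : ℝ)))
    {M : ℝ} (hM : ∀ t : ℝ, 0 ≤ t → ‖T t‖ ≤ M) :
    IsClosed (generatorGraph T : Set (X × X)) := by
  have hgraph : (generatorGraph T : Set (X × X)) =
      ⋂ b ∈ Ici (0 : ℝ), {p | T b p.1 - p.1 = ∫ s in (0 : ℝ)..b, T s p.2} := by
    ext p
    simp only [SetLike.mem_coe, mem_generatorGraph, mem_iInter₂, mem_ofPred_eq, mem_Ici,
      isGen_iff_forall_orbit_sub_eq_integral hT0 hTadd hTcont]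
  rw [hgraph]
  refine isClosed_biInter fun b hb => isClosed_eq
    (((T b).continuous.comp continuous_fst).sub continuous_fst) ?_
  obtain ⟨Φ, hΦ⟩ := exists_continuousLinearMap_integral_apply_of_isFiniteMeasure
    (ν := volume.restrict (Ioc 0 b)) T
    (ae_restrict_of_forall_mem measurableSet_Ioc fun s hs => hM s hs.1.le)
    (fun z => (((hTcont z).mono Icc_subset_Ici_self).intervalIntegrable_of_Icc hb).1)
  exact (Φ.continuous.comp continuous_snd).congr fun p => by
    simp [hΦ, intervalIntegral.integral_of_le hb]

end Generator

theorem Prod.norm_le_of_mul_norm_le {E F : Type*} [SeminormedAddCommGroup E]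
    [SeminormedAddCommGroup F] {c : ℝ} (hc : 0 < c) {x : E} {y : F} (h : c * ‖x‖ ≤ ‖y‖) :
    ‖(x, y)‖ ≤ (c⁻¹ + 1) * ‖y‖ := by
  have hx : ‖x‖ ≤ c⁻¹ * ‖y‖ := by rwa [inv_mul_eq_div, le_div_iff₀' hc]
  refine norm_prod_le_iff.2 ⟨by linarith [norm_nonneg y], ?_⟩
  nlinarith [norm_nonneg y, inv_pos.2 hc]

theorem stmt6_general {X : Type*} [NormedAddCommGroup X] [NormedSpace ℂ X] [CompleteSpace X]
    (T : ℝ → X →L[ℂ] X)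
    (hT0 : T 0 = ContinuousLinearMap.id ℂ X)
    (hTadd : ∀ s t : ℝ, 0 ≤ s → 0 ≤ t → T (s + t) = (T s).comp (T t))
    (hTcont : ∀ x : X, ContinuousOn (fun t => T t x) (Ici (0 : ℝ)))
    (hTbdd : ∃ M : ℝ, ∀ t : ℝ, 0 ≤ t → ‖T t‖ ≤ M)
    (μ : Measure ℝ) [SigmaFinite μ]
    (h : ℝ → ℂ) (hnorm : ∀ t, ‖h t‖ = 1)
    (hRange : ∀ x y : X, IsGen T x y → IntegrableOn (fun t => h t • T t y) (Ici (0 : ℝ)) μ)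
    (hinv : ∃ c > (0 : ℝ), ∀ x y : X, IsGen T x y → c * ‖x‖ ≤ ‖y‖) :
    ∃ C > (0 : ℝ), ∀ x y : X, IsGen T x y →
      ‖∫ t in Ici (0 : ℝ), h t • T t y ∂μ‖ ≤ C * ‖y‖ := by
  obtain ⟨M, hM⟩ := hTbdd
  obtain ⟨c, hc, hcx⟩ := hinv
  have : CompleteSpace (generatorGraph T) :=
    (isClosed_generatorGraph hT0 hTadd hTcont hM).completeSpace_coe
  let K : ℝ → generatorGraph T →L[ℂ] X := fun t =>
    h t • (T t).comp ((ContinuousLinearMap.snd ℂ X X).comp (generatorGraph T).subtypeL)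
  have hM0 : 0 ≤ M := (norm_nonneg _).trans (hM 0 le_rfl)
  have hK : ∀ t ∈ Ici (0 : ℝ), ‖K t‖ ≤ M := fun t ht =>
    (K t).opNorm_le_bound hM0 fun p => by
      simpa [K, norm_smul, hnorm] using ((T t).le_of_opNorm_le (hM t ht) _).trans
        (mul_le_mul_of_nonneg_left (norm_snd_le (p : X × X)) hM0)
  obtain ⟨Ψ, hΨ⟩ := exists_continuousLinearMap_integral_apply K
    (ae_restrict_of_forall_mem measurableSet_Ici hK) fun p => hRange _ _ p.2
  refine ⟨(‖Ψ‖ + 1) * (c⁻¹ + 1), by positivity, fun x y hxy => ?_⟩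
  calc ‖∫ t in Ici (0 : ℝ), h t • T t y ∂μ‖ = ‖Ψ ⟨(x, y), hxy⟩‖ := by rw [hΨ]; rfl
    _ ≤ ‖Ψ‖ * ‖(x, y)‖ := Ψ.le_opNorm _
    _ ≤ (‖Ψ‖ + 1) * ((c⁻¹ + 1) * ‖y‖) := by
      gcongr
      · linarith
      · exact Prod.norm_le_of_mul_norm_le hc (hcx x y hxy)
    _ = (‖Ψ‖ + 1) * (c⁻¹ + 1) * ‖y‖ := by ring

/-- With the complex measure `a` encoded as `da = h dμ` (`μ = |a|`,
`‖h t‖ = 1`) and `g(A)x = ∫_{[0,∞)} h t • T t x ∂μ` with domain `D₀(g(A))`: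
if `Im A ⊆ D₀(g(A))` and `A` has a bounded inverse on its range
(`‖Ax‖ ≥ c‖x‖` on `D(A)` for some `c > 0`), then `g(A)` is bounded on `Im A`:
there is `C > 0` with `‖g(A)y‖ ≤ C‖y‖` for all `y ∈ Im A`. -/
theorem stmt6 {X : Type*} [NormedAddCommGroup X] [NormedSpace ℂ X] [CompleteSpace X]
    (T : ℝ → X →L[ℂ] X)
    (hT0 : T 0 = ContinuousLinearMap.id ℂ X)
    (hTadd : ∀ s t : ℝ, 0 ≤ s → 0 ≤ t → T (s + t) = (T s).comp (T t))
    (hTcont : ∀ x : X, ContinuousOn (fun t => T t x) (Ici (0 : ℝ)))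
    (hTbdd : ∃ M : ℝ, ∀ t : ℝ, 0 ≤ t → ‖T t‖ ≤ M)
    (μ : Measure ℝ) [SigmaFinite μ] [IsLocallyFiniteMeasure μ]
    (h : ℝ → ℂ) (hmeas : Measurable h) (hnorm : ∀ t, ‖h t‖ = 1)
    (hRange : ∀ x y : X, IsGen T x y → IntegrableOn (fun t => h t • T t y) (Ici (0 : ℝ)) μ)
    (hinv : ∃ c > (0 : ℝ), ∀ x y : X, IsGen T x y → c * ‖x‖ ≤ ‖y‖) :
    ∃ C > (0 : ℝ), ∀ x y : X, IsGen T x y →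
      ‖∫ t in Ici (0 : ℝ), h t • T t y ∂μ‖ ≤ C * ‖y‖ :=
  stmt6_general T hT0 hTadd hTcont hTbdd μ h hnorm hRange hinv
end
end

section
/- Let ρ be a positive Borel measure on (0,∞) with ρ((0,r]) < ∞ and ∫_{(r,∞)} u^{-1} dρ(u) < ∞ for all r > 0, and set f(r) := ∫_{(r,∞)} u^{-1} dρ(u). Define ψ(A)x := ∫_{(0,∞)} (T(u)x − x) u^{-1} dρ(u) (Bochner integral, which exists for every x ∈ D(A)), and define ψ̃(A)x := ∫₀^∞ T(t)x f(t) dt with domain D₀(ψ̃(A)) = {x ∈ X : this Bochner integral exists}. Then for every x ∈ D(A) ∩ D₀(ψ̃(A)): ψ̃(A)x ∈ D(A) and A(ψ̃(A)x) = ψ(A)x. -/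
/-!
For `x ∈ D(A)`, Fubini's theorem applied to the kernel `𝟙_{t<u} u⁻¹ T(t)x` rewrites
`ψ̃(A)x = ∫ u⁻¹ (∫₀ᵘ T(t)x dt) dρ(u)`. Each `∫₀ᵘ T(t)x dt` lies in `D(A)` with image
`T(u)x - x`, and its difference quotients at `s` equal `s⁻¹ ∫₀ˢ T(t)(T(u)x - x) dt`, hence are
bounded by `M ‖T(u)x - x‖`. Since `u⁻¹ ‖T(u)x - x‖` is `ρ`-integrable (it is `O(1)` near `0`
because `x ∈ D(A)`, and `O(u⁻¹)` near `∞`), dominated convergence moves `A` under the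
`ρ`-integral, which gives `ψ(A)x`.
-/

open MeasureTheory Filter Topology Set

noncomputable section

structure IsC0Semigroup {X : Type*} [NormedAddCommGroup X] [NormedSpace ℂ X]
    (T : ℝ → X →L[ℂ] X) : Prop where
  map_zero : T 0 = ContinuousLinearMap.id ℂ X
  map_add : ∀ s t : ℝ, 0 ≤ s → 0 ≤ t → T (s + t) = (T s).comp (T t)
  continuousOn : ∀ x : X, ContinuousOn (fun t => T t x) (Ici (0 : ℝ))

section Semigroup

variable {X : Type*} [NormedAddCommGroup X] [NormedSpace ℂ X] {T : ℝ → X →L[ℂ] X}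
  {x y : X} {s t u M : ℝ}

def diffQuot (T : ℝ → X →L[ℂ] X) (s : ℝ) (x : X) : X := s⁻¹ • (T s x - x)

theorem isGen_iff : IsGen T x y ↔ Tendsto (fun s => diffQuot T s x) (𝓝[>] 0) (𝓝 y) := Iff.rfl

theorem diffQuot_smul (T : ℝ → X →L[ℂ] X) (s c : ℝ) (x : X) :
    diffQuot T s (c • x) = c • diffQuot T s x := by
  rw [diffQuot, diffQuot, ContinuousLinearMap.map_smul_of_tower, ← smul_sub, smul_comm]

theorem IsGen.const_smul (hx : IsGen T x y) (c : ℝ) : IsGen T (c • x) (c • y) := by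
  simpa only [isGen_iff, diffQuot_smul] using (isGen_iff.1 hx).const_smul c

theorem isGen_integral [CompleteSpace X] {α : Type*} [MeasurableSpace α] {μ : Measure α}
    {h w : α → X} (bound : α → ℝ) (hh : Integrable h μ) (hbound_int : Integrable bound μ)
    (hbound : ∀ s > 0, ∀ᵐ a ∂μ, ‖diffQuot T s (h a)‖ ≤ bound a)
    (hgen : ∀ᵐ a ∂μ, IsGen T (h a) (w a)) :
    IsGen T (∫ a, h a ∂μ) (∫ a, w a ∂μ) := by
  have hquot : ∀ s : ℝ, diffQuot T s (∫ a, h a ∂μ) = ∫ a, diffQuot T s (h a) ∂μ := fun s => by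
    rw [diffQuot, ← (T s).integral_comp_comm hh, ← integral_sub ((T s).integrable_comp hh) hh,
      ← integral_smul]
    rfl
  simp only [isGen_iff, hquot]
  refine tendsto_integral_filter_of_dominated_convergence bound
    (Eventually.of_forall fun s => ?_) (eventually_mem_nhdsWithin.mono hbound) hbound_int hgen
  exact (((T s).continuous.comp_aestronglyMeasurable hh.1).sub hh.1).const_smul _

theorem norm_integral_orbit_le (hM : ∀ t : ℝ, 0 ≤ t → ‖T t‖ ≤ M) (x : X) (hs : 0 ≤ s) :
    ‖∫ t in (0 : ℝ)..s, T t x‖ ≤ s * (M * ‖x‖) := by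
  have hbound : ∀ t ∈ uIoc 0 s, ‖T t x‖ ≤ M * ‖x‖ := fun t ht =>
    (T t).le_of_opNorm_le (hM t ((uIoc_of_le hs ▸ ht).1.le)) x
  simpa [abs_of_nonneg hs, mul_comm] using
    intervalIntegral.norm_integral_le_of_norm_le_const hbound

namespace IsC0Semigroup

variable (hT : IsC0Semigroup T)
include hT

theorem apply_apply (hs : 0 ≤ s) (ht : 0 ≤ t) (x : X) : T s (T t x) = T (s + t) x := by
  rw [hT.map_add s t hs ht]; rfl

theorem intervalIntegrable_orbit (x : X) {a b : ℝ} (ha : 0 ≤ a) (hb : 0 ≤ b) :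
    IntervalIntegrable (fun t => T t x) volume a b :=
  ((hT.continuousOn x).mono fun _ hr => le_trans (le_min ha hb) hr.1).intervalIntegrable

theorem tendsto_average_orbit [CompleteSpace X] (x : X) :
    Tendsto (fun s : ℝ => s⁻¹ • ∫ t in (0 : ℝ)..s, T t x) (𝓝[>] 0) (𝓝 x) := by
  have hcont : ContinuousOn (fun t => T t x) (Ioi 0) :=
    (hT.continuousOn x).mono Ioi_subset_Ici_self
  have hderiv : HasDerivWithinAt (fun s => ∫ t in (0 : ℝ)..s, T t x) (T 0 x) (Ici 0) 0 :=
    intervalIntegral.integral_hasDerivWithinAt_right (hT.intervalIntegrable_orbit x le_rfl le_rfl)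
      (hcont.stronglyMeasurableAtFilter_nhdsWithin measurableSet_Ioi 0)
      (((hT.continuousOn x).continuousWithinAt self_mem_Ici).mono Ioi_subset_Ici_self)
  rw [hT.map_zero] at hderiv
  refine ((hasDerivWithinAt_iff_tendsto_slope' self_notMem_Ioi).1 hderiv.Ioi_of_Ici).congr
    fun s => ?_
  simp [slope_def_module]

theorem hasDerivWithinAt_orbit (hx : IsGen T x y) (ht : 0 ≤ t) :
    HasDerivWithinAt (fun r => T r x) (T t y) (Ioi t) t := by
  have hshift : Tendsto (fun r => r - t) (𝓝[>] t) (𝓝[>] 0) := by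
    have := ((continuous_sub_right t).continuousWithinAt (s := Ioi t) (x := t)).tendsto_nhdsWithin
      (t := Ioi 0) fun r hr => sub_pos.2 hr
    rwa [sub_self] at this
  rw [hasDerivWithinAt_iff_tendsto_slope' self_notMem_Ioi]
  refine (((T t).continuous.tendsto y).comp (hx.comp hshift)).congr' ?_
  filter_upwards [self_mem_nhdsWithin] with r (hr : t < r)
  rw [Function.comp_apply, Function.comp_apply, slope_def_module,
    ContinuousLinearMap.map_smul_of_tower, map_sub, hT.apply_apply ht (sub_nonneg.2 hr.le),
    add_sub_cancel]

theorem orbit_sub_eq_integral [CompleteSpace X] (hx : IsGen T x y) (hs : 0 ≤ s) :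
    T s x - x = ∫ r in (0 : ℝ)..s, T r y := by
  rw [intervalIntegral.integral_eq_sub_of_hasDeriv_right_of_le hs
    ((hT.continuousOn x).mono Icc_subset_Ici_self)
    (fun t ht => hT.hasDerivWithinAt_orbit hx ht.1.le) (hT.intervalIntegrable_orbit y le_rfl hs),
    hT.map_zero]
  rfl

/-- `T s ∫₀ᵘ T t x dt - ∫₀ᵘ T t x dt` and `∫₀ˢ T t (T u x - x) dt` both equal
`∫₀^{s+u} - ∫₀ᵘ - ∫₀ˢ` of the orbit. -/
theorem apply_integral_orbit_sub [CompleteSpace X] (hs : 0 ≤ s) (hu : 0 ≤ u) (x : X) :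
    T s (∫ t in (0 : ℝ)..u, T t x) - ∫ t in (0 : ℝ)..u, T t x
      = ∫ t in (0 : ℝ)..s, T t (T u x - x) := by
  have hint : ∀ {a b : ℝ}, 0 ≤ a → 0 ≤ b → IntervalIntegrable (fun t => T t x) volume a b :=
    hT.intervalIntegrable_orbit x
  have hleft : T s (∫ t in (0 : ℝ)..u, T t x) = ∫ t in s..u + s, T t x := by
    have hshift := intervalIntegral.integral_comp_add_right (fun t => T t x) s (a := 0) (b := u)
    rw [zero_add] at hshift
    rw [← hshift, ← (T s).intervalIntegral_comp_comm (hint le_rfl hu)]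
    refine intervalIntegral.integral_congr fun t ht => ?_
    rw [uIcc_of_le hu] at ht
    rw [hT.apply_apply hs ht.1, add_comm]
  have hright : ∫ t in (0 : ℝ)..s, T t (T u x) = ∫ t in u..s + u, T t x := by
    have hshift := intervalIntegral.integral_comp_add_right (fun t => T t x) u (a := 0) (b := s)
    rw [zero_add] at hshift
    rw [← hshift]
    refine intervalIntegral.integral_congr fun t ht => ?_
    rw [uIcc_of_le hs] at ht
    exact hT.apply_apply ht.1 hu x
  have hsum : 0 ≤ u + s := add_nonneg hu hs
  have h1 := intervalIntegral.integral_add_adjacent_intervals (hint le_rfl hs) (hint hs hsum)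
  have h2 := intervalIntegral.integral_add_adjacent_intervals (hint le_rfl hu) (hint hu hsum)
  simp only [map_sub]
  rw [intervalIntegral.integral_sub (hT.intervalIntegrable_orbit _ le_rfl hs) (hint le_rfl hs),
    hleft, hright, add_comm s u]
  linear_combination (norm := module) h1 - h2

theorem isGen_integral_orbit [CompleteSpace X] (hu : 0 ≤ u) (x : X) :
    IsGen T (∫ t in (0 : ℝ)..u, T t x) (T u x - x) := by
  refine (hT.tendsto_average_orbit (T u x - x)).congr' ?_
  filter_upwards [self_mem_nhdsWithin] with s (hs : 0 < s)
  rw [hT.apply_integral_orbit_sub hs.le hu]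

variable [CompleteSpace X] (hM : ∀ t : ℝ, 0 ≤ t → ‖T t‖ ≤ M)
include hM

theorem norm_orbit_sub_le (hx : IsGen T x y) (hs : 0 ≤ s) : ‖T s x - x‖ ≤ s * (M * ‖y‖) := by
  rw [hT.orbit_sub_eq_integral hx hs]
  exact norm_integral_orbit_le hM y hs

theorem norm_diffQuot_smul_integral_orbit_le (hs : 0 < s) (hu : 0 ≤ u) (c : ℝ) (x : X) :
    ‖diffQuot T s (c • ∫ t in (0 : ℝ)..u, T t x)‖ ≤ M * ‖c • (T u x - x)‖ := by
  rw [diffQuot_smul, norm_smul, norm_smul, mul_left_comm]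
  gcongr
  rw [diffQuot, hT.apply_integral_orbit_sub hs.le hu, norm_smul,
    Real.norm_of_nonneg (inv_nonneg.2 hs.le), inv_mul_le_iff₀ hs]
  exact norm_integral_orbit_le hM _ hs.le

theorem integrableOn_inv_smul_orbit_sub {ρ : Measure ℝ} (hρfin : ∀ r : ℝ, 0 < r → ρ (Ioc 0 r) < ⊤)
    (hρint : ∀ r : ℝ, 0 < r → IntegrableOn (fun u : ℝ => u⁻¹) (Ioi r) ρ) (hx : IsGen T x y) :
    IntegrableOn (fun u => u⁻¹ • (T u x - x)) (Ioi 0) ρ := by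
  have hmeas : AEStronglyMeasurable (fun u => u⁻¹ • (T u x - x)) (ρ.restrict (Ioi 0)) :=
    ((continuousOn_inv₀.mono fun u (hu : 0 < u) => hu.ne').smul
      (((hT.continuousOn x).mono Ioi_subset_Ici_self).sub continuousOn_const)).aestronglyMeasurable
      measurableSet_Ioi
  rw [← Ioc_union_Ioi_eq_Ioi zero_le_one]
  refine IntegrableOn.union ⟨hmeas.mono_set Ioc_subset_Ioi_self,
    HasFiniteIntegral.restrict_of_bounded (C := M * ‖y‖) (hρfin 1 one_pos) ?_⟩
    (Integrable.mono' ((hρint 1 one_pos).const_mul ((M + 1) * ‖x‖))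
      (hmeas.mono_set (Ioi_subset_Ioi zero_le_one)) ?_)
  · filter_upwards [ae_restrict_mem measurableSet_Ioc] with u hu
    rw [norm_smul, Real.norm_of_nonneg (inv_nonneg.2 hu.1.le), inv_mul_le_iff₀ hu.1]
    exact hT.norm_orbit_sub_le hM hx hu.1.le
  · filter_upwards [ae_restrict_mem measurableSet_Ioi] with u (hu : 1 < u)
    have hu0 : 0 < u := zero_lt_one.trans hu
    rw [norm_smul, Real.norm_of_nonneg (inv_nonneg.2 hu0.le), mul_comm]
    gcongr
    calc ‖T u x - x‖ ≤ M * ‖x‖ + ‖x‖ :=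
          (norm_sub_le _ _).trans (by gcongr; exact (T u).le_of_opNorm_le (hM u hu0.le) x)
      _ = (M + 1) * ‖x‖ := by ring

end IsC0Semigroup

end Semigroup

theorem isLocallyFiniteMeasure_restrict_Ioi {ρ : Measure ℝ}
    (hρfin : ∀ r : ℝ, 0 < r → ρ (Ioc 0 r) < ⊤) : IsLocallyFiniteMeasure (ρ.restrict (Ioi 0)) := by
  refine ⟨fun a => ⟨Iio (max a 0 + 1), Iio_mem_nhds (by linarith [le_max_left a 0]), ?_⟩⟩
  rw [Measure.restrict_apply measurableSet_Iio]
  refine (measure_mono ?_).trans_lt (hρfin _ (add_pos_of_nonneg_of_pos (le_max_right a 0) one_pos))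
  exact fun u hu => ⟨hu.2, hu.1.le⟩

section TailKernel

variable {E : Type*} [NormedAddCommGroup E] [NormedSpace ℝ E] {ρ : Measure ℝ} {g : ℝ → E}

def tailKernel (g : ℝ → E) : ℝ × ℝ → E := {p | p.1 < p.2}.indicator fun p => p.2⁻¹ • g p.1

theorem tailKernel_slice_left (g : ℝ → E) (t : ℝ) :
    (fun u => tailKernel g (t, u)) = (Ioi t).indicator fun u => u⁻¹ • g t := rfl

theorem tailKernel_slice_right (g : ℝ → E) (u : ℝ) :
    (fun t => tailKernel g (t, u)) = (Iio u).indicator fun t => u⁻¹ • g t := rfl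

theorem integrable_tailKernel [SFinite (ρ.restrict (Ioi 0))]
    (hρint : ∀ r : ℝ, 0 < r → IntegrableOn (fun u : ℝ => u⁻¹) (Ioi r) ρ)
    (hg : AEStronglyMeasurable g (volume.restrict (Ioi 0)))
    (hint : IntegrableOn (fun t => (∫ u in Ioi t, u⁻¹ ∂ρ) • g t) (Ioi 0)) :
    Integrable (tailKernel g) ((volume.restrict (Ioi 0)).prod (ρ.restrict (Ioi 0))) := by
  have hmeas : AEStronglyMeasurable (tailKernel g)
      ((volume.restrict (Ioi 0)).prod (ρ.restrict (Ioi 0))) :=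
    (measurable_snd.inv.aestronglyMeasurable.smul hg.comp_fst).indicator
      (measurableSet_lt measurable_fst measurable_snd)
  refine (integrable_prod_iff hmeas).2 ⟨?_, hint.norm.congr ?_⟩
  · filter_upwards [ae_restrict_mem measurableSet_Ioi] with t (ht : 0 < t)
    rw [tailKernel_slice_left, integrable_indicator_iff measurableSet_Ioi, IntegrableOn,
      Measure.restrict_restrict_of_subset (Ioi_subset_Ioi ht.le)]
    exact (hρint t ht).smul_const (g t)
  · filter_upwards [ae_restrict_mem measurableSet_Ioi] with t (ht : 0 < t)
    have hpos : ∀ u ∈ Ioi t, 0 ≤ u⁻¹ := fun u hu => inv_nonneg.2 (ht.trans hu).le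
    rw [show (fun u => ‖tailKernel g (t, u)‖) = (Ioi t).indicator fun u => ‖u⁻¹ • g t‖ from
        funext fun u => norm_indicator_eq_indicator_norm _ (t, u),
      integral_indicator measurableSet_Ioi,
      Measure.restrict_restrict_of_subset (Ioi_subset_Ioi ht.le), norm_smul,
      Real.norm_of_nonneg (setIntegral_nonneg measurableSet_Ioi hpos), ← integral_mul_const]
    refine setIntegral_congr_fun measurableSet_Ioi fun u hu => ?_
    rw [norm_smul, Real.norm_of_nonneg (hpos u hu)]

theorem integral_tail_smul_eq_integral_inv_smul_primitive [CompleteSpace E]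
    [SFinite (ρ.restrict (Ioi 0))]
    (hρint : ∀ r : ℝ, 0 < r → IntegrableOn (fun u : ℝ => u⁻¹) (Ioi r) ρ)
    (hg : AEStronglyMeasurable g (volume.restrict (Ioi 0)))
    (hint : IntegrableOn (fun t => (∫ u in Ioi t, u⁻¹ ∂ρ) • g t) (Ioi 0)) :
    IntegrableOn (fun u => u⁻¹ • ∫ t in (0 : ℝ)..u, g t) (Ioi 0) ρ ∧
      ∫ t in Ioi 0, (∫ u in Ioi t, u⁻¹ ∂ρ) • g t
        = ∫ u in Ioi 0, u⁻¹ • (∫ t in (0 : ℝ)..u, g t) ∂ρ := by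
  have hF := integrable_tailKernel hρint hg hint
  have hinner : ∀ᵐ t ∂(volume.restrict (Ioi 0)),
      ∫ u in Ioi 0, tailKernel g (t, u) ∂ρ = (∫ u in Ioi t, u⁻¹ ∂ρ) • g t := by
    filter_upwards [ae_restrict_mem measurableSet_Ioi] with t (ht : 0 < t)
    rw [tailKernel_slice_left, integral_indicator measurableSet_Ioi,
      Measure.restrict_restrict_of_subset (Ioi_subset_Ioi ht.le), integral_smul_const]
  have houter : ∀ᵐ u ∂(ρ.restrict (Ioi 0)),
      ∫ t in Ioi 0, tailKernel g (t, u) = u⁻¹ • ∫ t in (0 : ℝ)..u, g t := by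
    filter_upwards [ae_restrict_mem measurableSet_Ioi] with u (hu : 0 < u)
    rw [tailKernel_slice_right, integral_indicator measurableSet_Iio,
      Measure.restrict_restrict measurableSet_Iio, Iio_inter_Ioi, integral_smul,
      intervalIntegral.integral_of_le hu.le, integral_Ioc_eq_integral_Ioo]
  refine ⟨hF.integral_prod_right.congr houter, ?_⟩
  calc ∫ t in Ioi 0, (∫ u in Ioi t, u⁻¹ ∂ρ) • g t
      = ∫ t in Ioi 0, ∫ u in Ioi 0, tailKernel g (t, u) ∂ρ := (integral_congr_ae hinner).symm
    _ = ∫ u in Ioi 0, (∫ t in Ioi 0, tailKernel g (t, u)) ∂ρ :=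
        integral_integral_swap (f := fun t u => tailKernel g (t, u)) hF
    _ = ∫ u in Ioi 0, u⁻¹ • (∫ t in (0 : ℝ)..u, g t) ∂ρ := integral_congr_ae houter

end TailKernel

/-- Let `ρ` be a positive Borel measure on `(0,∞)` with `ρ((0,r]) < ∞`
and `∫_{(r,∞)} u⁻¹ dρ(u) < ∞` for all `r > 0`, and `f(r) := ∫_{(r,∞)} u⁻¹ dρ(u)`.
Define the Bochner–Phillips operator `ψ(A)x := ∫_{(0,∞)} u⁻¹ • (T(u)x − x) dρ(u)`
(which exists for every `x ∈ D(A)`) and the Hille–Phillips operator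
`ψ̃(A)x := ∫₀^∞ f(t) • T(t)x dt` with domain `D₀(ψ̃(A))`. Then for every
`x ∈ D(A) ∩ D₀(ψ̃(A))`: `ψ̃(A)x ∈ D(A)` and `A(ψ̃(A)x) = ψ(A)x`. -/
theorem stmt12 {X : Type*} [NormedAddCommGroup X] [NormedSpace ℂ X] [CompleteSpace X]
    (T : ℝ → X →L[ℂ] X)
    (hT0 : T 0 = ContinuousLinearMap.id ℂ X)
    (hTadd : ∀ s t : ℝ, 0 ≤ s → 0 ≤ t → T (s + t) = (T s).comp (T t))
    (hTcont : ∀ x : X, ContinuousOn (fun t => T t x) (Ici (0 : ℝ)))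
    (hTbdd : ∃ M : ℝ, ∀ t : ℝ, 0 ≤ t → ‖T t‖ ≤ M)
    (ρ : Measure ℝ)
    (hρfin : ∀ r : ℝ, 0 < r → ρ (Ioc (0 : ℝ) r) < ⊤)
    (hρint : ∀ r : ℝ, 0 < r → IntegrableOn (fun u : ℝ => u⁻¹) (Ioi r) ρ) :
    ∀ x y : X, IsGen T x y →
      IntegrableOn (fun u => u⁻¹ • (T u x - x)) (Ioi (0 : ℝ)) ρ ∧
      (IntegrableOn (fun t => (∫ u in Ioi t, u⁻¹ ∂ρ) • T t x) (Ici (0 : ℝ)) volume →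
        IsGen T (∫ t in Ici (0 : ℝ), (∫ u in Ioi t, u⁻¹ ∂ρ) • T t x)
          (∫ u in Ioi (0 : ℝ), u⁻¹ • (T u x - x) ∂ρ)) := by
  intro x y hx
  obtain ⟨M, hM⟩ := hTbdd
  have hT : IsC0Semigroup T := ⟨hT0, hTadd, hTcont⟩
  have hψ := hT.integrableOn_inv_smul_orbit_sub hM hρfin hρint hx
  refine ⟨hψ, fun hψ' => ?_⟩
  have := isLocallyFiniteMeasure_restrict_Ioi hρfin
  obtain ⟨hprim, hfubini⟩ := integral_tail_smul_eq_integral_inv_smul_primitive hρint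
    (((hTcont x).mono Ioi_subset_Ici_self).aestronglyMeasurable measurableSet_Ioi)
    (hψ'.mono_set Ioi_subset_Ici_self)
  rw [integral_Ici_eq_integral_Ioi, hfubini]
  refine isGen_integral (fun u => M * ‖u⁻¹ • (T u x - x)‖) hprim (hψ.norm.const_mul M)
    (fun s hs => ?_) ?_
  · filter_upwards [ae_restrict_mem measurableSet_Ioi] with u (hu : 0 < u)
    exact hT.norm_diffQuot_smul_integral_orbit_le hM hs hu.le _ _
  · filter_upwards [ae_restrict_mem measurableSet_Ioi] with u (hu : 0 < u)
    exact (hT.isGen_integral_orbit hu.le x).const_smul _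
end
end
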